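/- The κ-layer ReLU encoder-decoder network F with skipped connections is globally Lipschitz continuous with Lipschitz constant K = sup_{x ∈ ℝ^{d₀}} ‖B̃^{skp}(x) B^{skp}(x)ᵀ‖₂ (a maximum over the finitely many realized matrices, hence finite): for all x₁, x₂ ∈ ℝ^{d₀}, ‖F(x₁) − F(x₂)‖₂ ≤ K ‖x₁ − x₂‖₂. -/

import Mathlib

open Matrix

/-- Elementwise ReLU. -/
def relu {ι : Type*} (z : ι → ℝ) : ι → ℝ := fun i => max (z i) 0

/-- The diagonal 0–1 activation matrix `Λ(z)`, with `Λ(z)_{ii} = 1` iff `z_i > 0`,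
so that `σ(z) = Λ(z) z`. -/
noncomputable def actMat {ι : Type*} [Fintype ι] [DecidableEq ι] (z : ι → ℝ) : Matrix ι ι ℝ :=
  Matrix.diagonal fun i => if 0 < z i then 1 else 0

/-- Encoder features: `ξ⁰ = x`, `ξ^{l+1} = σ(E^{l+1ᵀ} ξ^l)`. -/
def enc (d : ℕ → ℕ) (E : (l : ℕ) → Matrix (Fin (d l)) (Fin (d (l + 1))) ℝ)
    (x : Fin (d 0) → ℝ) : (l : ℕ) → Fin (d l) → ℝ
  | 0 => x
  | l + 1 => relu ((E l)ᵀ.mulVec (enc d E x l))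

/-- Skipped features `χ^{l+1} = σ(S^{l+1ᵀ} ξ^l)`. -/
def chiF (d s : ℕ → ℕ) (E : (l : ℕ) → Matrix (Fin (d l)) (Fin (d (l + 1))) ℝ)
    (S : (l : ℕ) → Matrix (Fin (d l)) (Fin (s (l + 1))) ℝ)
    (x : Fin (d 0) → ℝ) (l : ℕ) : Fin (s (l + 1)) → ℝ :=
  relu ((S l)ᵀ.mulVec (enc d E x l))

/-- Decoder features `ξ̃^j` of the κ-layer skip network: `ξ̃^κ = ξ^κ` and
`ξ̃^j = σ(D^{j+1} ξ̃^{j+1} + S̃^{j+1} χ^{j+1})` for `j < κ`; `F(x) = ξ̃⁰`. -/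
def decS (κ : ℕ) (d s : ℕ → ℕ)
    (E D : (l : ℕ) → Matrix (Fin (d l)) (Fin (d (l + 1))) ℝ)
    (S St : (l : ℕ) → Matrix (Fin (d l)) (Fin (s (l + 1))) ℝ)
    (x : Fin (d 0) → ℝ) : (j : ℕ) → Fin (d j) → ℝ
  | j =>
    if h : j < κ then
      relu ((D j).mulVec (decS κ d s E D S St x (j + 1)) + (St j).mulVec (chiF d s E S x j))
    else enc d E x j
  termination_by j => κ - j
  decreasing_by simp_wf; omega

/-- `Υ^l(x) = Υ^{l−1}(x) E^l Λ^l(x)`, `Υ⁰ = I`. -/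
noncomputable def UpsE (d : ℕ → ℕ) (E : (l : ℕ) → Matrix (Fin (d l)) (Fin (d (l + 1))) ℝ)
    (x : Fin (d 0) → ℝ) : (l : ℕ) → Matrix (Fin (d 0)) (Fin (d l)) ℝ
  | 0 => 1
  | l + 1 => UpsE d E x l * E l * actMat ((E l)ᵀ.mulVec (enc d E x l))

/-- `Υ̃^l(x) = Υ̃^{l−1}(x) Λ̃^l(x) D^l`, `Υ̃⁰ = I`, where
`Λ̃^l(x) = Λ(D^l ξ̃^l + S̃^l χ^l)`. -/
noncomputable def UpsDS (κ : ℕ) (d s : ℕ → ℕ)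
    (E D : (l : ℕ) → Matrix (Fin (d l)) (Fin (d (l + 1))) ℝ)
    (S St : (l : ℕ) → Matrix (Fin (d l)) (Fin (s (l + 1))) ℝ)
    (x : Fin (d 0) → ℝ) : (l : ℕ) → Matrix (Fin (d 0)) (Fin (d l)) ℝ
  | 0 => 1
  | l + 1 => UpsDS κ d s E D S St x l *
      actMat ((D l).mulVec (decS κ d s E D S St x (l + 1)) + (St l).mulVec (chiF d s E S x l)) *
      D l

/-- `M^l(x) = S^l Λ_S^l(x)` with `Λ_S^l(x) = Λ(S^{lᵀ} ξ^{l−1})`. -/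
noncomputable def Mskip (d s : ℕ → ℕ)
    (E : (l : ℕ) → Matrix (Fin (d l)) (Fin (d (l + 1))) ℝ)
    (S : (l : ℕ) → Matrix (Fin (d l)) (Fin (s (l + 1))) ℝ)
    (x : Fin (d 0) → ℝ) (l : ℕ) : Matrix (Fin (d l)) (Fin (s (l + 1))) ℝ :=
  S l * actMat ((S l)ᵀ.mulVec (enc d E x l))

/-- `M̃^l(x) = Λ̃^l(x) S̃^l`. -/
noncomputable def MskipT (κ : ℕ) (d s : ℕ → ℕ)
    (E D : (l : ℕ) → Matrix (Fin (d l)) (Fin (d (l + 1))) ℝ)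
    (S St : (l : ℕ) → Matrix (Fin (d l)) (Fin (s (l + 1))) ℝ)
    (x : Fin (d 0) → ℝ) (l : ℕ) : Matrix (Fin (d l)) (Fin (s (l + 1))) ℝ :=
  actMat ((D l).mulVec (decS κ d s E D S St x (l + 1)) + (St l).mulVec (chiF d s E S x l)) * St l

/-- Column index of the skip frame matrices `B^{skp}(x)`, `B̃^{skp}(x)`. -/
abbrev SkipIdx (κ : ℕ) (d s : ℕ → ℕ) := (Fin (d κ)) ⊕ (Σ l : Fin κ, Fin (s (l + 1)))

/-- `B^{skp}(x) = [Υ^κ, Υ^{κ−1}M^κ, …, M¹]`. -/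
noncomputable def Bskip (κ : ℕ) (d s : ℕ → ℕ)
    (E : (l : ℕ) → Matrix (Fin (d l)) (Fin (d (l + 1))) ℝ)
    (S : (l : ℕ) → Matrix (Fin (d l)) (Fin (s (l + 1))) ℝ)
    (x : Fin (d 0) → ℝ) : Matrix (Fin (d 0)) (SkipIdx κ d s) ℝ :=
  fun i c => match c with
  | Sum.inl j => UpsE d E x κ i j
  | Sum.inr ⟨l, j⟩ => (UpsE d E x l * Mskip d s E S x l) i j

/-- `B̃^{skp}(x) = [Υ̃^κ, Υ̃^{κ−1}M̃^κ, …, M̃¹]`. -/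
noncomputable def BskipT (κ : ℕ) (d s : ℕ → ℕ)
    (E D : (l : ℕ) → Matrix (Fin (d l)) (Fin (d (l + 1))) ℝ)
    (S St : (l : ℕ) → Matrix (Fin (d l)) (Fin (s (l + 1))) ℝ)
    (x : Fin (d 0) → ℝ) : Matrix (Fin (d 0)) (SkipIdx κ d s) ℝ :=
  fun i c => match c with
  | Sum.inl j => UpsDS κ d s E D S St x κ i j
  | Sum.inr ⟨l, j⟩ => (UpsDS κ d s E D S St x l * MskipT κ d s E D S St x l) i j

/-- The Euclidean (ℓ²) norm of a vector. -/
noncomputable def euclNorm {ι : Type*} [Fintype ι] (v : ι → ℝ) : ℝ :=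
  Real.sqrt (∑ i, v i ^ 2)

/-- The spectral norm `‖M‖₂` of a matrix: the operator norm with respect to the
Euclidean norms, i.e. the supremum of `‖Mv‖₂` over unit vectors `v`. -/
noncomputable def specNorm {ι ι' : Type*} [Fintype ι] [Fintype ι'] (M : Matrix ι ι' ℝ) : ℝ :=
  ⨆ v : {v : ι' → ℝ // euclNorm v = 1}, euclNorm (M.mulVec v.1)

/-!
Writing `A(x) = B̃^{skp}(x) B^{skp}(x)ᵀ`, unrolling the recursion with `σ(z) = Λ(z) z` gives
`F(x) = A(x) x`, and `A(x)` only depends on the finitely many activation patterns, so it takes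
finitely many values. Transported to Euclidean space, `F` is therefore a continuous function that
agrees at every point with one of finitely many linear maps, each `K`-Lipschitz. Such a function
is locally `K`-Lipschitz around every point: near `x`, `F` can only agree with maps that agree
with it at `x`, by continuity. Along a segment, a mean-value (fencing) argument turns this
local bound into the global one.
-/

open Set Filter Topology
open scoped NNReal

theorem dist_le_mul_of_forall_eventually_dist_le {X : Type*} [PseudoMetricSpace X] {g : ℝ → X}
    (hg : Continuous g) {C : ℝ}
    (hloc : ∀ t, ∀ᶠ s in 𝓝[>] t, dist (g s) (g t) ≤ C * (s - t)) {a b : ℝ} (hab : a ≤ b) :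
    dist (g b) (g a) ≤ C * (b - a) := by
  refine image_le_of_liminf_slope_right_le_deriv_boundary (f := fun s => dist (g s) (g a))
    (B := fun s => C * (s - a)) (B' := fun _ => C) (hg.dist continuous_const).continuousOn
    (by simp) (by fun_prop) (fun x _ => ?_) (fun x _ r hr => ?_) ⟨hab, le_rfl⟩
  · simpa using ((hasDerivAt_id x).sub_const a).const_mul C |>.hasDerivWithinAt
  · refine Eventually.frequently ?_
    filter_upwards [hloc x, self_mem_nhdsWithin] with z hz (hxz : x < z)
    rw [slope_def_field, div_lt_iff₀ (sub_pos.2 hxz)]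
    calc dist (g z) (g a) - dist (g x) (g a) ≤ dist (g z) (g x) := by
          linarith [dist_triangle (g z) (g x) (g a)]
      _ ≤ C * (z - x) := hz
      _ < r * (z - x) := by gcongr

theorem LipschitzWith.of_forall_eventually_dist_le {E X : Type*} [NormedAddCommGroup E]
    [NormedSpace ℝ E] [PseudoMetricSpace X] {f : E → X} (hf : Continuous f) {C : ℝ≥0}
    (hloc : ∀ x, ∀ᶠ y in 𝓝 x, dist (f y) (f x) ≤ C * dist y x) : LipschitzWith C f := by
  refine .of_dist_le_mul fun x y => ?_
  set γ := AffineMap.lineMap (k := ℝ) y x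
  have hγ : Continuous γ := AffineMap.lineMap_continuous
  have hloc' : ∀ t, ∀ᶠ s in 𝓝[>] t, dist (f (γ s)) (f (γ t)) ≤ C * dist x y * (s - t) := by
    intro t
    filter_upwards [nhdsWithin_le_nhds ((hγ.tendsto t).eventually (hloc (γ t))),
      self_mem_nhdsWithin] with s hs (hts : t < s)
    rwa [dist_lineMap_lineMap, Real.dist_eq, abs_of_pos (sub_pos.2 hts), dist_comm y,
      mul_comm (s - t), ← mul_assoc] at hs
  simpa [γ] using dist_le_mul_of_forall_eventually_dist_le (hf.comp hγ) hloc' zero_le_one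

theorem LipschitzWith.of_continuous_of_forall_exists_eq {E Y : Type*} [NormedAddCommGroup E]
    [NormedSpace ℝ E] [MetricSpace Y] {f : E → Y} (hf : Continuous f) {𝒜 : Set (E → Y)}
    (h𝒜 : 𝒜.Finite) {C : ℝ≥0} (hlip : ∀ A ∈ 𝒜, LipschitzWith C A)
    (hf𝒜 : ∀ x, ∃ A ∈ 𝒜, f x = A x) : LipschitzWith C f := by
  refine .of_forall_eventually_dist_le hf fun x => ?_
  have key : ∀ A ∈ 𝒜, ∀ᶠ y in 𝓝 x, f y = A y → dist (f y) (f x) ≤ C * dist y x := by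
    intro A hA
    by_cases hAx : f x = A x
    · exact .of_forall fun y hy => hy ▸ hAx ▸ (hlip A hA).dist_le_mul y x
    · filter_upwards [(isOpen_ne_fun hf (hlip A hA).continuous).mem_nhds hAx] with y hy h
      exact absurd h hy
  filter_upwards [h𝒜.eventually_all.2 key] with y hy
  obtain ⟨A, hA, hyA⟩ := hf𝒜 y
  exact hy A hA hyA

section FiniteRange
variable {α β γ δ : Type*}

theorem Set.Finite.range_comp {g : α → β} (hg : (range g).Finite) (op : β → γ) :
    (range fun a => op (g a)).Finite :=
  (hg.image op).subset <| range_subset_iff.2 fun a => mem_image_of_mem op (mem_range_self a)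

theorem Set.Finite.range_comp₂ {g : α → β} {h : α → γ} (hg : (range g).Finite)
    (hh : (range h).Finite) (op : β → γ → δ) : (range fun a => op (g a) (h a)).Finite :=
  (hg.image2 op hh).subset <|
    range_subset_iff.2 fun a => mem_image2_of_mem (mem_range_self a) (mem_range_self a)

theorem finite_range_of_forall_finite_range_apply {ι : Type*} [Finite ι] {β : ι → Type*}
    {T : α → (i : ι) → β i} (h : ∀ i, (range fun a => T a i).Finite) : (range T).Finite :=
  (Set.Finite.pi h).subset fun _ ⟨a, ha⟩ i _ => ⟨a, congrFun ha i⟩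

end FiniteRange

section EuclideanNorm
variable {ι ι' : Type*} [Fintype ι] [Fintype ι']

theorem specNorm_nonneg (M : Matrix ι ι' ℝ) : 0 ≤ specNorm M :=
  Real.iSup_nonneg fun _ => Real.sqrt_nonneg _

theorem euclNorm_eq_norm_toLp (v : ι → ℝ) : euclNorm v = ‖WithLp.toLp 2 v‖ := by
  simp [euclNorm, EuclideanSpace.norm_eq]

theorem euclNorm_mulVec_le_specNorm_mul (M : Matrix ι ι' ℝ) (v : ι' → ℝ) :
    euclNorm (M *ᵥ v) ≤ specNorm M * euclNorm v := by
  classical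
  rcases eq_or_ne v 0 with rfl | hv
  · simp [euclNorm]
  have hpos : 0 < euclNorm v := by
    rw [euclNorm_eq_norm_toLp]; exact norm_pos_iff.2 (by simpa using hv)
  have hbdd :
      BddAbove (range fun u : {u : ι' → ℝ // euclNorm u = 1} => euclNorm (M *ᵥ u.1)) := by
    open scoped Matrix.Norms.L2Operator in
    refine ⟨‖M‖, forall_mem_range.2 fun ⟨u, hu⟩ => ?_⟩
    rw [euclNorm_eq_norm_toLp] at hu ⊢
    simpa [hu] using M.l2_opNorm_mulVec (WithLp.toLp 2 u)
  have hunit : euclNorm ((euclNorm v)⁻¹ • v) = 1 := by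
    rw [euclNorm_eq_norm_toLp, WithLp.toLp_smul, norm_smul, ← euclNorm_eq_norm_toLp,
      Real.norm_of_nonneg (inv_nonneg.2 hpos.le), inv_mul_cancel₀ hpos.ne']
  have := le_ciSup hbdd ⟨_, hunit⟩
  rw [mulVec_smul, euclNorm_eq_norm_toLp, WithLp.toLp_smul, norm_smul, ← euclNorm_eq_norm_toLp,
      Real.norm_of_nonneg (inv_nonneg.2 hpos.le), inv_mul_le_iff₀ hpos] at this
  rwa [specNorm, mul_comm]

theorem lipschitzWith_toLp_mulVec_ofLp (M : Matrix ι ι' ℝ) :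
    LipschitzWith (specNorm M).toNNReal
      fun y : EuclideanSpace ℝ ι' => WithLp.toLp 2 (M *ᵥ y.ofLp) := by
  refine .of_dist_le_mul fun y z => ?_
  simp only [dist_eq_norm, ← WithLp.toLp_sub, ← mulVec_sub, ← euclNorm_eq_norm_toLp]
  calc euclNorm (M *ᵥ (y.ofLp - z.ofLp)) ≤ specNorm M * euclNorm (y.ofLp - z.ofLp) :=
        euclNorm_mulVec_le_specNorm_mul M _
    _ ≤ (specNorm M).toNNReal * ‖y - z‖ := by
        rw [euclNorm_eq_norm_toLp]
        exact mul_le_mul_of_nonneg_right (Real.le_coe_toNNReal _) (norm_nonneg _)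

end EuclideanNorm

theorem continuous_relu {ι : Type*} : Continuous (relu : (ι → ℝ) → ι → ℝ) :=
  continuous_pi fun i => (continuous_apply i).max continuous_const

section ActMat
variable {ι : Type*} [Fintype ι] [DecidableEq ι]

theorem relu_eq_actMat_mulVec (z : ι → ℝ) : relu z = actMat z *ᵥ z := by
  ext i
  by_cases h : 0 < z i
  · simp [relu, actMat, mulVec_diagonal, h, h.le]
  · simp [relu, actMat, mulVec_diagonal, h, not_lt.1 h]

theorem transpose_actMat (z : ι → ℝ) : (actMat z)ᵀ = actMat z :=
  diagonal_transpose _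

theorem finite_range_actMat {α : Type*} (z : α → ι → ℝ) :
    (range fun a => actMat (z a)).Finite := by
  refine (finite_range fun b : ι → Bool =>
    diagonal fun i => if b i then (1 : ℝ) else 0).subset ?_
  rintro _ ⟨a, rfl⟩
  exact ⟨fun i => decide (0 < z a i), by simp [actMat]⟩

end ActMat

section Network
variable {κ : ℕ} {d s : ℕ → ℕ}
  {E D : (l : ℕ) → Matrix (Fin (d l)) (Fin (d (l + 1))) ℝ}
  {S St : (l : ℕ) → Matrix (Fin (d l)) (Fin (s (l + 1))) ℝ}

theorem decS_of_lt (x : Fin (d 0) → ℝ) {j : ℕ} (hj : j < κ) :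
    decS κ d s E D S St x j =
      relu (D j *ᵥ decS κ d s E D S St x (j + 1) + St j *ᵥ chiF d s E S x j) := by
  rw [decS, dif_pos hj]

theorem decS_of_not_lt (x : Fin (d 0) → ℝ) {j : ℕ} (hj : ¬ j < κ) :
    decS κ d s E D S St x j = enc d E x j := by
  rw [decS, dif_neg hj]

theorem enc_eq_mulVec (x : Fin (d 0) → ℝ) (l : ℕ) :
    enc d E x l = (UpsE d E x l)ᵀ *ᵥ x := by
  induction l with
  | zero => simp [enc, UpsE]
  | succ l ih =>
    rw [enc, UpsE, relu_eq_actMat_mulVec, ih]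
    simp only [mulVec_mulVec, transpose_mul, transpose_actMat, Matrix.mul_assoc]

theorem chiF_eq_mulVec (x : Fin (d 0) → ℝ) (l : ℕ) :
    chiF d s E S x l = (UpsE d E x l * Mskip d s E S x l)ᵀ *ᵥ x := by
  rw [chiF, Mskip, relu_eq_actMat_mulVec, enc_eq_mulVec]
  simp only [mulVec_mulVec, transpose_mul, transpose_actMat, Matrix.mul_assoc]

theorem decS_zero_eq_add_sum (x : Fin (d 0) → ℝ) {j : ℕ} (hj : j ≤ κ) :
    decS κ d s E D S St x 0 = UpsDS κ d s E D S St x j *ᵥ decS κ d s E D S St x j +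
      ∑ l ∈ Finset.range j,
        (UpsDS κ d s E D S St x l * MskipT κ d s E D S St x l) *ᵥ chiF d s E S x l := by
  induction j with
  | zero => simp [UpsDS]
  | succ j ih =>
    rw [ih (by omega), Finset.sum_range_succ, ← add_assoc, decS_of_lt x (by omega : j < κ),
      relu_eq_actMat_mulVec, UpsDS, MskipT]
    simp only [mulVec_mulVec, mulVec_add, Matrix.mul_assoc]
    abel

theorem BskipT_mul_transpose_Bskip (x : Fin (d 0) → ℝ) :
    BskipT κ d s E D S St x * (Bskip κ d s E S x)ᵀ =
      UpsDS κ d s E D S St x κ * (UpsE d E x κ)ᵀ + ∑ l ∈ Finset.range κ,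
        (UpsDS κ d s E D S St x l * MskipT κ d s E D S St x l) *
          (UpsE d E x l * Mskip d s E S x l)ᵀ := by
  ext i j
  rw [mul_apply, Fintype.sum_sum_type, Matrix.add_apply, Matrix.sum_apply, Finset.sum_range,
    ← Finset.univ_sigma_univ, Finset.sum_sigma]
  rfl

theorem decS_zero_eq_mulVec (x : Fin (d 0) → ℝ) :
    decS κ d s E D S St x 0 = (BskipT κ d s E D S St x * (Bskip κ d s E S x)ᵀ) *ᵥ x := by
  rw [decS_zero_eq_add_sum x le_rfl, decS_of_not_lt x (lt_irrefl κ), enc_eq_mulVec,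
    BskipT_mul_transpose_Bskip, add_mulVec, sum_mulVec]
  simp only [chiF_eq_mulVec, mulVec_mulVec]

theorem continuous_enc (l : ℕ) : Continuous fun x => enc d E x l := by
  induction l with
  | zero => exact continuous_id
  | succ l ih => exact continuous_relu.comp (continuous_const.matrix_mulVec ih)

theorem continuous_chiF (l : ℕ) : Continuous fun x => chiF d s E S x l :=
  continuous_relu.comp (continuous_const.matrix_mulVec (continuous_enc l))

theorem continuous_decS (j : ℕ) : Continuous fun x => decS κ d s E D S St x j := by
  by_cases hj : j < κ
  · simp_rw [decS_of_lt _ hj]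
    exact continuous_relu.comp ((continuous_const.matrix_mulVec (continuous_decS (j + 1))).add
      (continuous_const.matrix_mulVec (continuous_chiF j)))
  · simp_rw [decS_of_not_lt _ hj]
    exact continuous_enc j
termination_by κ - j

theorem finite_range_UpsE (l : ℕ) : (range fun x => UpsE d E x l).Finite := by
  induction l with
  | zero => exact finite_range_const
  | succ l ih => exact ih.range_comp₂ (finite_range_actMat _) fun A B => A * E l * B

theorem finite_range_UpsDS (l : ℕ) : (range fun x => UpsDS κ d s E D S St x l).Finite := by
  induction l with
  | zero => exact finite_range_const
  | succ l ih => exact ih.range_comp₂ (finite_range_actMat _) fun A B => A * B * D l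

theorem finite_range_Mskip (l : ℕ) : (range fun x => Mskip d s E S x l).Finite :=
  (finite_range_actMat _).range_comp (S l * ·)

theorem finite_range_MskipT (l : ℕ) : (range fun x => MskipT κ d s E D S St x l).Finite :=
  (finite_range_actMat _).range_comp (· * St l)

theorem finite_range_Bskip : (range (Bskip κ d s E S)).Finite := by
  refine finite_range_of_forall_finite_range_apply fun i =>
    finite_range_of_forall_finite_range_apply fun c => ?_
  rcases c with j | ⟨l, j⟩
  · exact (finite_range_UpsE κ).range_comp fun M => M i j
  · exact ((finite_range_UpsE l).range_comp₂ (finite_range_Mskip l) (· * ·)).range_comp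
      fun M => M i j

theorem finite_range_BskipT : (range (BskipT κ d s E D S St)).Finite := by
  refine finite_range_of_forall_finite_range_apply fun i =>
    finite_range_of_forall_finite_range_apply fun c => ?_
  rcases c with j | ⟨l, j⟩
  · exact (finite_range_UpsDS κ).range_comp fun M => M i j
  · exact ((finite_range_UpsDS l).range_comp₂ (finite_range_MskipT l) (· * ·)).range_comp
      fun M => M i j

end Network

/-- The κ-layer ReLU encoder-decoder network `F` with skipped
connections is globally Lipschitz with Lipschitz constant
`K = sup_x ‖B̃^{skp}(x)B^{skp}(x)ᵀ‖₂` (a supremum of the finitely many realized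
matrices): `‖F(x₁) − F(x₂)‖₂ ≤ K ‖x₁ − x₂‖₂` for all `x₁, x₂`. -/
theorem stmt_16 (κ : ℕ) (d s : ℕ → ℕ)
    (E D : (l : ℕ) → Matrix (Fin (d l)) (Fin (d (l + 1))) ℝ)
    (S St : (l : ℕ) → Matrix (Fin (d l)) (Fin (s (l + 1))) ℝ) :
    (Set.range fun x : Fin (d 0) → ℝ =>
      BskipT κ d s E D S St x * (Bskip κ d s E S x)ᵀ).Finite ∧
    ∀ x₁ x₂ : Fin (d 0) → ℝ,
      euclNorm (decS κ d s E D S St x₁ 0 - decS κ d s E D S St x₂ 0) ≤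
        (⨆ x : Fin (d 0) → ℝ,
          specNorm (BskipT κ d s E D S St x * (Bskip κ d s E S x)ᵀ)) *
          euclNorm (x₁ - x₂) := by
  have hfin : (range fun x => BskipT κ d s E D S St x * (Bskip κ d s E S x)ᵀ).Finite :=
    finite_range_BskipT.range_comp₂ finite_range_Bskip fun B B' => B * B'ᵀ
  refine ⟨hfin, fun x₁ x₂ => ?_⟩
  set K := ⨆ x, specNorm (BskipT κ d s E D S St x * (Bskip κ d s E S x)ᵀ)
  have hK : ∀ x, specNorm (BskipT κ d s E D S St x * (Bskip κ d s E S x)ᵀ) ≤ K :=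
    le_ciSup (hfin.range_comp specNorm).bddAbove
  let F (y : EuclideanSpace ℝ (Fin (d 0))) : EuclideanSpace ℝ (Fin (d 0)) :=
    WithLp.toLp 2 (decS κ d s E D S St y.ofLp 0)
  have hF : LipschitzWith K.toNNReal F := by
    refine .of_continuous_of_forall_exists_eq ?_
      (hfin.image fun M y => WithLp.toLp 2 (M *ᵥ y.ofLp)) ?_ fun y => ?_
    · exact (PiLp.continuous_toLp 2 _).comp
        ((continuous_decS 0).comp (PiLp.continuous_ofLp 2 _))
    · rintro _ ⟨_, ⟨x, rfl⟩, rfl⟩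
      exact (lipschitzWith_toLp_mulVec_ofLp _).weaken (Real.toNNReal_le_toNNReal (hK x))
    · exact ⟨_, mem_image_of_mem _ (mem_range_self y.ofLp), by simp [F, decS_zero_eq_mulVec]⟩
  have := hF.dist_le_mul (WithLp.toLp 2 x₁) (WithLp.toLp 2 x₂)
  rwa [dist_eq_norm, dist_eq_norm, ← WithLp.toLp_sub, ← WithLp.toLp_sub,
    ← euclNorm_eq_norm_toLp, ← euclNorm_eq_norm_toLp, Real.coe_toNNReal _ ((specNorm_nonneg _).trans (hK 0))] at this
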